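/- Let K be a field, κ, n₀ ∈ ℕ with n₀ > 2κ, and F, G, H, U, V ∈ K[[X]][Y] with H monic in Y, F ≡ G·H mod X^{n₀}, U·G + V·H ≡ X^κ mod X^{n₀−κ}, deg_Y U < deg_Y H, deg_Y V < deg_Y G. Let α ∈ K[[X]][Y] satisfy X^κ·α = F − G·H, let Q, R be the quotient and remainder of U·α by H, and set G̃ := G + α·V + Q·G, H̃ := H + R. Let β ∈ K[[X]][Y] be such that X^κ·(1 + β) = U·G̃ + V·H̃ (which exists, X^κ dividing U·G̃ + V·H̃), and let S, T be the quotient and remainder of the Euclidean division of U·β by the monic polynomial H̃. Then Ũ := U − T and Ṽ := V − β·V − S·G̃ satisfy Ũ·G̃ + Ṽ·H̃ ≡ X^κ mod X^{2n₀−3κ}, with deg_Y Ũ < deg_Y H̃. -/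

import Mathlib

open Polynomial

/-!
The factor update changes `U·G + V·H` only by multiples of `X^(n₀-κ)`, because `α`, and with it
the quotient and remainder of `U·α` by `H`, is divisible by `X^(n₀-κ)`. Hence `X^κ·β` is divisible
by `X^(n₀-κ)`, i.e. `X^(n₀-2κ) ∣ β`. The Newton-type correction of `(U, V)` replaces the defect
`X^κ·β` by `-X^κ·β²`, which is divisible by `X^(κ + 2(n₀-2κ)) = X^(2n₀-3κ)`.
-/

namespace Polynomial

variable {A : Type*} [CommRing A] {p q : A[X]}

theorem smul_divByMonic (c : A) (p : A[X]) : c • p /ₘ q = c • (p /ₘ q) := by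
  nontriviality A
  by_cases hq : q.Monic
  · exact (div_modByMonic_unique (c • (p /ₘ q)) (c • (p %ₘ q)) hq
      ⟨by rw [mul_smul_comm, ← smul_add, modByMonic_add_div],
        (degree_smul_le _ _).trans_lt (degree_modByMonic_lt _ hq)⟩).1
  · simp only [divByMonic_eq_of_not_monic _ hq, smul_zero]

theorem C_dvd_divByMonic {c : A} (h : C c ∣ p) : C c ∣ p /ₘ q := by
  obtain ⟨p, rfl⟩ := h
  rw [← smul_eq_C_mul, smul_divByMonic, smul_eq_C_mul]
  exact dvd_mul_right _ _

theorem C_dvd_modByMonic {c : A} (h : C c ∣ p) : C c ∣ p %ₘ q := by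
  obtain ⟨p, rfl⟩ := h
  rw [← smul_eq_C_mul, smul_modByMonic, smul_eq_C_mul]
  exact dvd_mul_right _ _

theorem degree_sub_modByMonic_lt [Nontrivial A] {u : A[X]} (hq : q.Monic)
    (hu : u.degree < q.degree) : (u - p %ₘ q).degree < q.degree :=
  (degree_sub_le _ _).trans_lt (max_lt hu (degree_modByMonic_lt _ hq))

end Polynomial

section BezoutUpdate

variable {A : Type*} [CommRing A] {e a U V G H α Q R : A}

theorem dvd_bezout_defect_of_factor_update (hUα : R + H * Q = U * α)
    (hUV : e ∣ U * G + V * H - a) (hQ : e ∣ Q) (hR : e ∣ R) :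
    e ∣ U * (G + α * V + Q * G) + V * (H + R) - a := by
  have h : U * (G + α * V + Q * G) + V * (H + R) - a =
      (U * G + V * H - a) * (1 + Q) + Q * a + 2 * V * R := by
    linear_combination V * hUα.symm
  rw [h]
  exact dvd_add (dvd_add (dvd_mul_of_dvd_left hUV _) (dvd_mul_of_dvd_left hQ _))
    (dvd_mul_of_dvd_right hR _)

theorem bezout_defect_of_coefficient_update {β S T : A}
    (hβ : a * (1 + β) = U * G + V * H) (hUβ : T + H * S = U * β) :
    (U - T) * G + (V - β * V - S * G) * H - a = -(a * β ^ 2) := by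
  linear_combination (β - 1) * hβ - G * hUβ

end BezoutUpdate

theorem generalised_hensel_step_bezout_general {K : Type*} [Field K] (κ n₀ : ℕ)
    (hn : 2 * κ < n₀)
    (F G H U V α β G' H' : Polynomial (PowerSeries K)) (hH : H.Monic)
    (hFGH : Polynomial.C ((PowerSeries.X : PowerSeries K) ^ n₀) ∣ F - G * H)
    (hUV : Polynomial.C ((PowerSeries.X : PowerSeries K) ^ (n₀ - κ)) ∣
      U * G + V * H - Polynomial.C ((PowerSeries.X : PowerSeries K) ^ κ))
    (hdegU : U.degree < H.degree)
    (hα : Polynomial.C ((PowerSeries.X : PowerSeries K) ^ κ) * α = F - G * H)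
    (hG' : G' = G + α * V + ((U * α) /ₘ H) * G)
    (hH' : H' = H + (U * α) %ₘ H)
    (hβ : Polynomial.C ((PowerSeries.X : PowerSeries K) ^ κ) * (1 + β) =
      U * G' + V * H') :
    Polynomial.C ((PowerSeries.X : PowerSeries K) ^ (2 * n₀ - 3 * κ)) ∣
      (U - (U * β) %ₘ H') * G' + (V - β * V - ((U * β) /ₘ H') * G') * H' -
        Polynomial.C ((PowerSeries.X : PowerSeries K) ^ κ) ∧
    (U - (U * β) %ₘ H').degree < H'.degree := by
  set x : PowerSeries K := PowerSeries.X
  have hx : ∀ k, (C (x ^ k) : (PowerSeries K)[X]) ≠ 0 := fun k => by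
    simp [x, PowerSeries.X_ne_zero]
  obtain ⟨d, rfl⟩ := Nat.exists_eq_add_of_le hn.le
  rw [show 2 * κ + d - κ = κ + d by omega] at hUV
  rw [show 2 * (2 * κ + d) - 3 * κ = κ + 2 * d by omega]
  have hαdvd : C (x ^ (κ + d)) ∣ α := by
    rw [show 2 * κ + d = κ + (κ + d) by omega, pow_add, C_mul, ← hα] at hFGH
    exact (mul_dvd_mul_iff_left (hx κ)).1 hFGH
  have hβdvd : C (x ^ d) ∣ β := by
    have h := dvd_bezout_defect_of_factor_update (modByMonic_add_div (U * α) H) hUV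
      (C_dvd_divByMonic (dvd_mul_of_dvd_right hαdvd U))
      (C_dvd_modByMonic (dvd_mul_of_dvd_right hαdvd U))
    rw [← hG', ← hH', ← hβ, mul_add, mul_one, add_sub_cancel_left, pow_add, C_mul] at h
    exact (mul_dvd_mul_iff_left (hx κ)).1 h
  have hdegR : ((U * α) %ₘ H).degree < H.degree := degree_modByMonic_lt _ hH
  have hH'monic : H'.Monic := hH' ▸ hH.add_of_left hdegR
  refine ⟨?_, degree_sub_modByMonic_lt hH'monic ?_⟩
  · rw [bezout_defect_of_coefficient_update hβ (modByMonic_add_div (U * β) H'), pow_add,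
      pow_mul', C_mul, C_pow (a := x ^ d)]
    exact (mul_dvd_mul_left _ (pow_dvd_pow_of_dvd hβdvd 2)).neg_right
  · rwa [hH', degree_add_eq_left_of_degree_lt hdegR]

/-- Correctness of the Bézout-relation update in one step of the generalised Hensel
lifting: with `G̃ = G + α·V + Q·G`, `H̃ = H + R` as in the factor update, `β` such that
`X^κ·(1+β) = U·G̃ + V·H̃`, and `S, T` the quotient and remainder of `U·β` by the monic
`H̃`, the polynomials `Ũ = U - T` and `Ṽ = V - β·V - S·G̃` satisfy
`Ũ·G̃ + Ṽ·H̃ ≡ X^κ (mod X^(2n₀-3κ))` with `deg_Y Ũ < deg_Y H̃`. -/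
theorem generalised_hensel_step_bezout {K : Type*} [Field K] (κ n₀ : ℕ)
    (hn : 2 * κ < n₀)
    (F G H U V α β G' H' : Polynomial (PowerSeries K)) (hH : H.Monic)
    (hFGH : Polynomial.C ((PowerSeries.X : PowerSeries K) ^ n₀) ∣ F - G * H)
    (hUV : Polynomial.C ((PowerSeries.X : PowerSeries K) ^ (n₀ - κ)) ∣
      U * G + V * H - Polynomial.C ((PowerSeries.X : PowerSeries K) ^ κ))
    (hdegU : U.degree < H.degree) (hdegV : V.degree < G.degree)
    (hα : Polynomial.C ((PowerSeries.X : PowerSeries K) ^ κ) * α = F - G * H)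
    (hG' : G' = G + α * V + ((U * α) /ₘ H) * G)
    (hH' : H' = H + (U * α) %ₘ H)
    (hβ : Polynomial.C ((PowerSeries.X : PowerSeries K) ^ κ) * (1 + β) =
      U * G' + V * H') :
    Polynomial.C ((PowerSeries.X : PowerSeries K) ^ (2 * n₀ - 3 * κ)) ∣
      (U - (U * β) %ₘ H') * G' + (V - β * V - ((U * β) /ₘ H') * G') * H' -
        Polynomial.C ((PowerSeries.X : PowerSeries K) ^ κ) ∧
    (U - (U * β) %ₘ H').degree < H'.degree :=
  generalised_hensel_step_bezout_general κ n₀ hn F G H U V α β G' H' hH hFGH hUV hdegU hα hG' hH' hβ
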